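/- arXiv:1602.07999 — 3 statements merged into one kernel-verified Lean document; each statement's English description precedes it below -/
import Mathlib

section
/- The permutation module B over the group algebra K[G] satisfies the right Frobenius module equations: for all x ∈ X and h ∈ G, δ_B(x·h) = (μ_B ⊗ id)(x ⊗ Δ(h)) and δ_B(x·h) = (id ⊗ μ)(δ_B(x) ⊗ h) (modulo associators), where μ is multiplication in K[G], Δ(h) = Σ_{y ∈ G} y ⊗ (y⁻¹h), μ_B is the right action, and δ_B is the coaction; equivalently δ_B ∘ μ_B = (μ_B ⊗ id) ∘ (id_B ⊗ Δ) = (id_B ⊗ μ) ∘ (δ_B ⊗ id) as linear maps B ⊗ K[G] → B ⊗ K[G]. -/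
open TensorProduct

/-! On a basis vector `x ⊗ g` all three maps produce the sum `∑ h, x·(g h⁻¹) ⊗ h`, written
with the summation variable `y = g h⁻¹` in `(μ_B ⊗ id)(x ⊗ Δ g)` and `y = h g⁻¹` in
`(id ⊗ μ)(δ_B x ⊗ g)`. -/

theorem Fintype.sum_mul_inv_eq_sum_inv_mul {G M : Type*} [Group G] [Fintype G]
    [AddCommMonoid M] (F : G → G → M) (g : G) :
    ∑ h, F (g * h⁻¹) h = ∑ y, F y (y⁻¹ * g) :=
  Fintype.sum_equiv ((Equiv.inv G).trans (Equiv.mulLeft g)) _ _ fun h => by simp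

section PermutationModule

variable {K G X : Type*} [CommSemiring K] [Group G] [Fintype G] {act : X → G → X}
  {μB : (X →₀ K) ⊗[K] MonoidAlgebra K G →ₗ[K] (X →₀ K)}
  {δB : (X →₀ K) →ₗ[K] (X →₀ K) ⊗[K] MonoidAlgebra K G}
  {Δ : MonoidAlgebra K G →ₗ[K] MonoidAlgebra K G ⊗[K] MonoidAlgebra K G}

theorem coaction_single_act (act_mul : ∀ (x : X) (g h : G), act x (g * h) = act (act x g) h)
    (hδB : ∀ x : X, δB (Finsupp.single x 1) =
      ∑ g : G, Finsupp.single (act x g⁻¹) (1 : K) ⊗ₜ[K] MonoidAlgebra.single g (1 : K))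
    (x : X) (g : G) :
    δB (Finsupp.single (act x g) 1) =
      ∑ h : G,
        Finsupp.single (act x (g * h⁻¹)) (1 : K) ⊗ₜ[K] MonoidAlgebra.single h (1 : K) := by
  simp only [hδB, act_mul]

theorem coaction_comp_action_eq_action_comp_comul
    (act_mul : ∀ (x : X) (g h : G), act x (g * h) = act (act x g) h)
    (hΔ : ∀ g : G, Δ (MonoidAlgebra.single g 1) =
      ∑ y : G, MonoidAlgebra.single y (1 : K) ⊗ₜ[K] MonoidAlgebra.single (y⁻¹ * g) (1 : K))
    (hμB : ∀ (x : X) (g : G),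
      μB (Finsupp.single x 1 ⊗ₜ[K] MonoidAlgebra.single g 1) = Finsupp.single (act x g) 1)
    (hδB : ∀ x : X, δB (Finsupp.single x 1) =
      ∑ g : G, Finsupp.single (act x g⁻¹) (1 : K) ⊗ₜ[K] MonoidAlgebra.single g (1 : K)) :
    δB ∘ₗ μB =
      TensorProduct.map μB LinearMap.id ∘ₗ
        (TensorProduct.assoc K (X →₀ K) (MonoidAlgebra K G)
          (MonoidAlgebra K G)).symm.toLinearMap ∘ₗ
          TensorProduct.map LinearMap.id Δ := by
  ext x g
  simp only [AlgebraTensorModule.curry_apply, curry_apply, LinearMap.restrictScalars_self,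
    LinearMap.coe_comp, Function.comp_apply, Finsupp.lsingle_apply, MonoidAlgebra.lsingle_apply,
    LinearEquiv.coe_coe, map_tmul, LinearMap.id_coe, id_eq, hμB, hΔ, tmul_sum, map_sum,
    assoc_symm_tmul, coaction_single_act act_mul hδB]
  exact Fintype.sum_mul_inv_eq_sum_inv_mul
    (fun a b => Finsupp.single (act x a) (1 : K) ⊗ₜ[K] MonoidAlgebra.single b (1 : K)) g

theorem coaction_comp_action_eq_mul_comp_coaction
    (act_mul : ∀ (x : X) (g h : G), act x (g * h) = act (act x g) h)
    (hμB : ∀ (x : X) (g : G),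
      μB (Finsupp.single x 1 ⊗ₜ[K] MonoidAlgebra.single g 1) = Finsupp.single (act x g) 1)
    (hδB : ∀ x : X, δB (Finsupp.single x 1) =
      ∑ g : G, Finsupp.single (act x g⁻¹) (1 : K) ⊗ₜ[K] MonoidAlgebra.single g (1 : K)) :
    δB ∘ₗ μB =
      TensorProduct.map LinearMap.id (LinearMap.mul' K (MonoidAlgebra K G)) ∘ₗ
        (TensorProduct.assoc K (X →₀ K) (MonoidAlgebra K G)
          (MonoidAlgebra K G)).toLinearMap ∘ₗ
          TensorProduct.map δB LinearMap.id := by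
  ext x g
  simp only [AlgebraTensorModule.curry_apply, curry_apply, LinearMap.restrictScalars_self,
    LinearMap.coe_comp, Function.comp_apply, Finsupp.lsingle_apply, MonoidAlgebra.lsingle_apply,
    LinearEquiv.coe_coe, map_tmul, LinearMap.id_coe, id_eq, hμB, coaction_single_act act_mul hδB,
    hδB, sum_tmul, map_sum, assoc_tmul, LinearMap.mul'_apply, MonoidAlgebra.single_mul_single,
    mul_one]
  exact (Fintype.sum_mul_inv_eq_sum_inv_mul
    (fun a b => Finsupp.single (act x a) (1 : K) ⊗ₜ[K] MonoidAlgebra.single b (1 : K)) g).trans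
      (Fintype.sum_equiv (Equiv.inv G) _ _ fun y => by simp)

end PermutationModule

theorem permutation_module_frobenius_general
    (K G X : Type*) [Field K] [Group G] [Fintype G]
    (act : X → G → X)
    (act_mul : ∀ (x : X) (g h : G), act x (g * h) = act (act x g) h)
    (Δ : MonoidAlgebra K G →ₗ[K] MonoidAlgebra K G ⊗[K] MonoidAlgebra K G)
    (hΔ : ∀ g : G,
      Δ (MonoidAlgebra.single g 1) =
        ∑ y : G,
          MonoidAlgebra.single y (1 : K) ⊗ₜ[K]
            MonoidAlgebra.single (y⁻¹ * g) (1 : K))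
    (μB : (X →₀ K) ⊗[K] MonoidAlgebra K G →ₗ[K] (X →₀ K))
    (hμB : ∀ (x : X) (g : G),
      μB (Finsupp.single x 1 ⊗ₜ[K] MonoidAlgebra.single g 1) =
        Finsupp.single (act x g) 1)
    (δB : (X →₀ K) →ₗ[K] (X →₀ K) ⊗[K] MonoidAlgebra K G)
    (hδB : ∀ x : X,
      δB (Finsupp.single x 1) =
        ∑ g : G,
          Finsupp.single (act x g⁻¹) (1 : K) ⊗ₜ[K]
            MonoidAlgebra.single g (1 : K)) :
    δB ∘ₗ μB =
        TensorProduct.map μB LinearMap.id ∘ₗ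
          (TensorProduct.assoc K (X →₀ K) (MonoidAlgebra K G)
              (MonoidAlgebra K G)).symm.toLinearMap ∘ₗ
            TensorProduct.map LinearMap.id Δ ∧
      δB ∘ₗ μB =
        TensorProduct.map LinearMap.id (LinearMap.mul' K (MonoidAlgebra K G)) ∘ₗ
          (TensorProduct.assoc K (X →₀ K) (MonoidAlgebra K G)
              (MonoidAlgebra K G)).toLinearMap ∘ₗ
            TensorProduct.map δB LinearMap.id :=
  ⟨coaction_comp_action_eq_action_comp_comul act_mul hΔ hμB hδB,
    coaction_comp_action_eq_mul_comp_coaction act_mul hμB hδB⟩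

/-- The permutation module `B = (X →₀ K)` of a finite right `G`-set `X` satisfies the
right Frobenius module equations
`δ_B ∘ μ_B = (μ_B ⊗ id) ∘ (id ⊗ Δ) = (id ⊗ μ) ∘ (δ_B ⊗ id)` over the group algebra
`K[G]` with comultiplication `Δ(g) = Σ_y y ⊗ y⁻¹g`. -/
theorem permutation_module_frobenius
    (K G X : Type*) [Field K] [Group G] [Fintype G] [Fintype X]
    (act : X → G → X)
    (act_one : ∀ x : X, act x 1 = x)
    (act_mul : ∀ (x : X) (g h : G), act x (g * h) = act (act x g) h)
    (Δ : MonoidAlgebra K G →ₗ[K] MonoidAlgebra K G ⊗[K] MonoidAlgebra K G)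
    (hΔ : ∀ g : G,
      Δ (MonoidAlgebra.single g 1) =
        ∑ y : G,
          MonoidAlgebra.single y (1 : K) ⊗ₜ[K]
            MonoidAlgebra.single (y⁻¹ * g) (1 : K))
    (μB : (X →₀ K) ⊗[K] MonoidAlgebra K G →ₗ[K] (X →₀ K))
    (hμB : ∀ (x : X) (g : G),
      μB (Finsupp.single x 1 ⊗ₜ[K] MonoidAlgebra.single g 1) =
        Finsupp.single (act x g) 1)
    (δB : (X →₀ K) →ₗ[K] (X →₀ K) ⊗[K] MonoidAlgebra K G)
    (hδB : ∀ x : X,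
      δB (Finsupp.single x 1) =
        ∑ g : G,
          Finsupp.single (act x g⁻¹) (1 : K) ⊗ₜ[K]
            MonoidAlgebra.single g (1 : K)) :
    δB ∘ₗ μB =
        TensorProduct.map μB LinearMap.id ∘ₗ
          (TensorProduct.assoc K (X →₀ K) (MonoidAlgebra K G)
              (MonoidAlgebra K G)).symm.toLinearMap ∘ₗ
            TensorProduct.map LinearMap.id Δ ∧
      δB ∘ₗ μB =
        TensorProduct.map LinearMap.id (LinearMap.mul' K (MonoidAlgebra K G)) ∘ₗ
          (TensorProduct.assoc K (X →₀ K) (MonoidAlgebra K G)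
              (MonoidAlgebra K G)).toLinearMap ∘ₗ
            TensorProduct.map δB LinearMap.id :=
  permutation_module_frobenius_general K G X act act_mul Δ hΔ μB hμB δB hδB
end

section
/- The twisted group algebra K^α[G] satisfies the Frobenius relations: Δ_α ∘ μ_α = (μ_α ⊗ id) ∘ (id ⊗ Δ_α) = (id ⊗ μ_α) ∘ (Δ_α ⊗ id) as K-linear maps K^α[G] ⊗ K^α[G] → K^α[G] ⊗ K^α[G] (modulo the canonical associator); moreover Δ_α is coassociative. -/
open TensorProduct

set_option synthInstance.maxHeartbeats 1000000
set_option maxHeartbeats 1000000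

/-- The twisted group algebra `K^α[G]` of a finite group `G` with a 2-cocycle
`α : G × G → Kˣ`, with multiplication `μ_α(g ⊗ h) = α(g,h) • (g·h)` and comultiplication
`Δ_α(g) = Σ_y α(y, y⁻¹g)⁻¹ • (y ⊗ y⁻¹g)`, satisfies the Frobenius relations
`Δ_α ∘ μ_α = (μ_α ⊗ id) ∘ (id ⊗ Δ_α) = (id ⊗ μ_α) ∘ (Δ_α ⊗ id)`, and `Δ_α` is
coassociative. -/
theorem twisted_group_algebra_frobenius
    (K G : Type*) [Field K] [Group G] [Fintype G]
    (α : G × G → Kˣ)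
    (hcoc : ∀ g h k : G, α (g, h) * α (g * h, k) = α (h, k) * α (g, h * k))
    (μα : (G →₀ K) ⊗[K] (G →₀ K) →ₗ[K] (G →₀ K))
    (hμα : ∀ g h : G,
      μα (Finsupp.single g 1 ⊗ₜ[K] Finsupp.single h 1) =
        (α (g, h) : K) • Finsupp.single (g * h) 1)
    (Δα : (G →₀ K) →ₗ[K] (G →₀ K) ⊗[K] (G →₀ K))
    (hΔα : ∀ g : G,
      Δα (Finsupp.single g 1) =
        ∑ y : G,
          ((α (y, y⁻¹ * g))⁻¹ : Kˣ) •
            (Finsupp.single y (1 : K) ⊗ₜ[K] Finsupp.single (y⁻¹ * g) (1 : K))) :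
    Δα ∘ₗ μα =
        TensorProduct.map μα LinearMap.id ∘ₗ
          (TensorProduct.assoc K (G →₀ K) (G →₀ K) (G →₀ K)).symm.toLinearMap ∘ₗ
            TensorProduct.map LinearMap.id Δα ∧
      Δα ∘ₗ μα =
        TensorProduct.map LinearMap.id μα ∘ₗ
          (TensorProduct.assoc K (G →₀ K) (G →₀ K) (G →₀ K)).toLinearMap ∘ₗ
            TensorProduct.map Δα LinearMap.id ∧
      (TensorProduct.assoc K (G →₀ K) (G →₀ K) (G →₀ K)).toLinearMap ∘ₗ
          TensorProduct.map Δα LinearMap.id ∘ₗ Δα =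
        TensorProduct.map LinearMap.id Δα ∘ₗ Δα := by
  have hK : ∀ a b c : G, (α (a, b) : K) * α (a * b, c) = α (b, c) * α (a, b * c) :=
    fun a b c => mod_cast congrArg Units.val (hcoc a b c)
  have hne : ∀ p : G × G, (α p : K) ≠ 0 := fun p => (α p).ne_zero
  refine ⟨?_, ?_, ?_⟩
  · ext g h
    simp only [TensorProduct.AlgebraTensorModule.curry_apply, TensorProduct.curry_apply,
      LinearMap.coe_restrictScalars, Finsupp.lsingle_apply, LinearMap.coe_comp,
      Function.comp_apply, LinearEquiv.coe_coe, TensorProduct.map_tmul, LinearMap.id_coe, id_eq]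
    rw [hμα, map_smul, hΔα, hΔα h]
    simp only [TensorProduct.tmul_sum, map_sum]
    simp only [Units.smul_def, TensorProduct.tmul_smul, map_smul,
      TensorProduct.assoc_symm_tmul, TensorProduct.map_tmul,
      ← TensorProduct.smul_tmul', LinearMap.id_coe, id_eq, hμα,
      Finset.smul_sum, smul_smul]
    refine (Fintype.sum_equiv (Equiv.mulLeft g) _ _ ?_).symm
    intro y
    have h1 : (g * y)⁻¹ * (g * h) = y⁻¹ * h := by group
    simp only [Equiv.coe_mulLeft, h1]
    congr 1
    have hk := hK g y (y⁻¹ * h)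
    rw [mul_inv_cancel_left] at hk
    simp only [Units.val_inv_eq_inv_val]
    rw [inv_mul_eq_div, ← div_eq_mul_inv, div_eq_div_iff (hne _) (hne _)]
    linear_combination hk
  · ext g h
    simp only [TensorProduct.AlgebraTensorModule.curry_apply, TensorProduct.curry_apply,
      LinearMap.coe_restrictScalars, Finsupp.lsingle_apply, LinearMap.coe_comp,
      Function.comp_apply, LinearEquiv.coe_coe, TensorProduct.map_tmul, LinearMap.id_coe, id_eq]
    rw [hμα, map_smul, hΔα, hΔα g]
    simp only [TensorProduct.sum_tmul, map_sum]
    simp only [Units.smul_def, ← TensorProduct.smul_tmul', map_smul,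
      TensorProduct.assoc_tmul, TensorProduct.map_tmul, TensorProduct.tmul_smul,
      LinearMap.id_coe, id_eq, hμα, Finset.smul_sum, smul_smul]
    refine Finset.sum_congr rfl fun y _ => ?_
    have h1 : y⁻¹ * g * h = y⁻¹ * (g * h) := mul_assoc _ _ _
    simp only [h1]
    congr 1
    have hk := hK y (y⁻¹ * g) h
    rw [mul_inv_cancel_left, h1] at hk
    simp only [Units.val_inv_eq_inv_val]
    rw [mul_comm ((α (g, h) : K)), inv_mul_eq_div, inv_mul_eq_div,
      div_eq_div_iff (hne _) (hne _)]
    linear_combination hk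
  · ext g
    simp only [LinearMap.coe_comp, Function.comp_apply, LinearEquiv.coe_coe,
      Finsupp.lsingle_apply]
    simp only [hΔα, map_sum, Units.smul_def, TensorProduct.sum_tmul,
      TensorProduct.tmul_sum, ← TensorProduct.smul_tmul', TensorProduct.tmul_smul,
      map_smul, TensorProduct.map_tmul, LinearMap.id_coe, id_eq,
      TensorProduct.assoc_tmul, Finset.smul_sum, smul_smul]
    rw [Finset.sum_comm]
    refine Finset.sum_congr rfl fun z _ => ?_
    refine (Fintype.sum_equiv (Equiv.mulLeft z) _ _ ?_).symm
    intro w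
    have h1 : z⁻¹ * (z * w) = w := by group
    have h2 : (z * w)⁻¹ * g = w⁻¹ * (z⁻¹ * g) := by group
    simp only [Equiv.coe_mulLeft, h1, h2]
    congr 1
    have hk := hK z w (w⁻¹ * (z⁻¹ * g))
    rw [mul_inv_cancel_left] at hk
    simp only [Units.val_inv_eq_inv_val, ← mul_inv_rev]
    rw [inv_inj]
    linear_combination -hk
end

section
/- If the 2-cocycle α is normalized, i.e. α(1,g) = α(g,1) = 1 for all g ∈ G, then the twisted group algebra K^α[G] is symmetric and projectively special with loop constant |G|: for all x, y ∈ K^α[G], ε(μ_α(x ⊗ y)) = ε(μ_α(y ⊗ x)), where ε is the linear functional taking the coefficient at the identity element of G, and μ_α ∘ Δ_α = |G| · id, i.e. μ_α(Δ_α(x)) = (Fintype.card G) • x for all x. -/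
open TensorProduct

/-!
On basis elements, `ε(μ_α(g ⊗ h))` vanishes unless `h = g⁻¹`, and in that case the cocycle identity
at `(g, g⁻¹, g)` together with normalization gives `α(g, g⁻¹) = α(g⁻¹, g)`. Each of the `|G|`
summands of `Δ_α(g)` multiplies back to `g`, since the coefficient `α(y, y⁻¹g)⁻¹` cancels the twist
`α(y, y⁻¹g)` of `μ_α`.
-/

theorem normalized_cocycle_apply_inv_comm {G M : Type*} [Group G] [MulOneClass M]
    (α : G × G → M)
    (hcoc : ∀ g h k : G, α (g, h) * α (g * h, k) = α (h, k) * α (g, h * k))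
    (hnorm : ∀ g : G, α (1, g) = 1 ∧ α (g, 1) = 1) (g : G) :
    α (g, g⁻¹) = α (g⁻¹, g) := by
  simpa [(hnorm g).1, (hnorm g).2] using hcoc g g⁻¹ g

section TwistedGroupAlgebra

variable {K G : Type*} [CommRing K] [Group G] {α : G × G → Kˣ}
  {μα : (G →₀ K) ⊗[K] (G →₀ K) →ₗ[K] (G →₀ K)}

theorem apply_one_twistedMul_single_single [DecidableEq G]
    (hμα : ∀ g h : G, μα (Finsupp.single g 1 ⊗ₜ[K] Finsupp.single h 1) =
      (α (g, h) : K) • Finsupp.single (g * h) 1) (g h : G) :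
    μα (Finsupp.single g 1 ⊗ₜ[K] Finsupp.single h 1) 1 =
      if g * h = 1 then (α (g, h) : K) else 0 := by
  rw [hμα, Finsupp.smul_apply, Finsupp.single_apply]
  split_ifs <;> simp

theorem twistedMul_apply_one_comm
    (hcoc : ∀ g h k : G, α (g, h) * α (g * h, k) = α (h, k) * α (g, h * k))
    (hnorm : ∀ g : G, α (1, g) = 1 ∧ α (g, 1) = 1)
    (hμα : ∀ g h : G, μα (Finsupp.single g 1 ⊗ₜ[K] Finsupp.single h 1) =
      (α (g, h) : K) • Finsupp.single (g * h) 1) (x y : G →₀ K) :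
    μα (x ⊗ₜ[K] y) 1 = μα (y ⊗ₜ[K] x) 1 := by
  classical
  suffices
      Finsupp.lapply 1 ∘ₗ μα = Finsupp.lapply 1 ∘ₗ μα ∘ₗ (TensorProduct.comm K _ _).toLinearMap from
    LinearMap.congr_fun this (x ⊗ₜ y)
  ext g h
  simp only [AlgebraTensorModule.curry_apply, curry_apply, LinearMap.coe_restrictScalars,
    LinearMap.comp_apply, LinearEquiv.coe_coe, comm_tmul, Finsupp.lapply_apply,
    Finsupp.lsingle_apply]
  rw [apply_one_twistedMul_single_single hμα, apply_one_twistedMul_single_single hμα]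
  rcases eq_or_ne (g * h) 1 with hgh | hgh
  · obtain rfl : h = g⁻¹ := eq_inv_of_mul_eq_one_right hgh
    simp [normalized_cocycle_apply_inv_comm α hcoc hnorm]
  · rw [if_neg hgh, if_neg (mul_eq_one_comm.not.mp hgh)]

variable [Fintype G] {Δα : (G →₀ K) →ₗ[K] (G →₀ K) ⊗[K] (G →₀ K)}

theorem twistedMul_twistedComul_eq_card_smul
    (hμα : ∀ g h : G, μα (Finsupp.single g 1 ⊗ₜ[K] Finsupp.single h 1) =
      (α (g, h) : K) • Finsupp.single (g * h) 1)
    (hΔα : ∀ g : G, Δα (Finsupp.single g 1) = ∑ y : G, ((α (y, y⁻¹ * g))⁻¹ : Kˣ) •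
      (Finsupp.single y (1 : K) ⊗ₜ[K] Finsupp.single (y⁻¹ * g) (1 : K))) (x : G →₀ K) :
    μα (Δα x) = Fintype.card G • x := by
  suffices μα ∘ₗ Δα = Fintype.card G • LinearMap.id from LinearMap.congr_fun this x
  ext g
  have summand (y : G) : μα (((α (y, y⁻¹ * g))⁻¹ : Kˣ) •
      (Finsupp.single y (1 : K) ⊗ₜ[K] Finsupp.single (y⁻¹ * g) 1)) = Finsupp.single g 1 := by
    rw [Units.smul_def, map_smul, hμα, smul_smul, Units.inv_mul, one_smul, mul_inv_cancel_left]
  simp [hΔα, summand]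

end TwistedGroupAlgebra

/-- If the 2-cocycle `α` is normalized (`α(1,g) = α(g,1) = 1`), then the twisted group
algebra `K^α[G]` is symmetric (`ε(μ_α(x ⊗ y)) = ε(μ_α(y ⊗ x))`, where `ε` takes the
coefficient at the identity) and projectively special with loop constant `|G|`
(`μ_α ∘ Δ_α = |G| • id`). -/
theorem twisted_group_algebra_symmetric_projectively_special
    (K G : Type*) [Field K] [Group G] [Fintype G]
    (α : G × G → Kˣ)
    (hcoc : ∀ g h k : G, α (g, h) * α (g * h, k) = α (h, k) * α (g, h * k))
    (hnorm : ∀ g : G, α (1, g) = 1 ∧ α (g, 1) = 1)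
    (μα : (G →₀ K) ⊗[K] (G →₀ K) →ₗ[K] (G →₀ K))
    (hμα : ∀ g h : G,
      μα (Finsupp.single g 1 ⊗ₜ[K] Finsupp.single h 1) =
        (α (g, h) : K) • Finsupp.single (g * h) 1)
    (Δα : (G →₀ K) →ₗ[K] (G →₀ K) ⊗[K] (G →₀ K))
    (hΔα : ∀ g : G,
      Δα (Finsupp.single g 1) =
        ∑ y : G,
          ((α (y, y⁻¹ * g))⁻¹ : Kˣ) •
            (Finsupp.single y (1 : K) ⊗ₜ[K] Finsupp.single (y⁻¹ * g) (1 : K)))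
    (ε : (G →₀ K) →ₗ[K] K)
    (hε : ∀ f : G →₀ K, ε f = f 1) :
    (∀ x y : (G →₀ K), ε (μα (x ⊗ₜ[K] y)) = ε (μα (y ⊗ₜ[K] x))) ∧
      ∀ x : (G →₀ K), μα (Δα x) = (Fintype.card G) • x := by
  refine ⟨fun x y => ?_, twistedMul_twistedComul_eq_card_smul hμα hΔα⟩
  rw [hε, hε]
  exact twistedMul_apply_one_comm hcoc hnorm hμα x y
end
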